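/- Fix an integer k ≥ 1. As x → ∞, ∑_{Ω(n)=k, P⁺(n)≤x} 1/n = ∑_{j=0}^{k} (c_{k-j}/j!) (log log x + β)^j + O_k((log log x)^{k-1} / log x), where β is Mertens' constant and c_m is defined by c₀ = 1, c_m = (1/m) ∑_{j=2}^{m} c_{m-j} Z(j). -/

import Mathlib

open Filter Real Asymptotics
open scoped Classical Topology BigOperators

/-- The finite set of primes `p ≤ x`, for a real number `x`. -/
noncomputable def primesUpTo (x : ℝ) : Finset ℕ :=
  (Finset.range (⌊x⌋₊ + 1)).filter Nat.Prime

/-- `n` is `x`-smooth: `n` is a positive integer all of whose prime factors are `≤ x`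
(equivalently, `P⁺(n) ≤ x`). -/
def IsSmooth (x : ℝ) (n : ℕ) : Prop := 0 < n ∧ ∀ p ∈ n.primeFactors, (p : ℝ) ≤ x

/-- `Ω n`: number of prime factors of `n` counted with multiplicity. -/
def bigOmega (n : ℕ) : ℕ := n.primeFactorsList.length

/-- Truncated prime zeta function `Z(t, x) = ∑_{p ≤ x} p^{-t}`. -/
noncomputable def Ztr (t x : ℝ) : ℝ := ∑ p ∈ primesUpTo x, (p : ℝ) ^ (-t)

/-- Prime zeta function `Z(j) = ∑_p p^{-j}`. -/
noncomputable def Zp (j : ℕ) : ℝ := ∑' p : Nat.Primes, (1 : ℝ) / ((p : ℕ) : ℝ) ^ j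

/-!
The generating function `∑ₖ (∑_{Ω(n) = k, P⁺(n) ≤ x} 1/n) tᵏ` is the Euler product
`∏_{p ≤ x} (1 - t/p)⁻¹`, whose Euler derivative satisfies `t F' = (∑_{i ≥ 1} Z(i, x) tⁱ) F` with
`Z(i, x) = ∑_{p ≤ x} p⁻ⁱ`. Splitting off the factor `exp (Z(1, x) t)` leaves a series whose
coefficients `c_m(x)` obey the recursion defining `c_m`, with `Z(j, x)` in place of `Z(j)`.
As `Z(j, x) = Z(j) + O(x^{-1/2})` for `j ≥ 2`, this gives `c_m(x) = c_m + O(x^{-1/2})`, so the sum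
is `∑_j c_{k-j}(x) Z(1, x)ʲ / j!` with `Z(1, x) = log log x + β + O(1 / log x)`, and the claim
follows by expanding the powers.
-/

open PowerSeries

namespace PowerSeries

section CommSemiring

variable {R : Type*} [CommSemiring R]

theorem coeff_X_mul_derivative (f : R⟦X⟧) (n : ℕ) :
    coeff n (X * d⁄dX R f) = n * coeff n f := by
  cases n with
  | zero => simp
  | succ n => rw [coeff_succ_X_mul, coeff_derivative, mul_comm]; push_cast; rfl

theorem X_mul_derivative_mul {F G f g : R⟦X⟧} (hF : X * d⁄dX R F = f * F)
    (hG : X * d⁄dX R G = g * G) : X * d⁄dX R (F * G) = (f + g) * (F * G) := by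
  calc X * d⁄dX R (F * G) = F * (X * d⁄dX R G) + G * (X * d⁄dX R F) := by
        rw [Derivation.leibniz, smul_eq_mul, smul_eq_mul]; ring
    _ = (f + g) * (F * G) := by rw [hF, hG]; ring

theorem X_mul_derivative_prod {ι : Type*} (s : Finset ι) {F f : ι → R⟦X⟧}
    (h : ∀ i ∈ s, X * d⁄dX R (F i) = f i * F i) :
    X * d⁄dX R (∏ i ∈ s, F i) = (∑ i ∈ s, f i) * ∏ i ∈ s, F i := by
  classical
  induction s using Finset.induction_on with
  | empty => simp
  | insert a s ha ih =>
    rw [Finset.prod_insert ha, Finset.sum_insert ha]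
    exact X_mul_derivative_mul (h a (Finset.mem_insert_self a s))
      (ih fun i hi => h i (Finset.mem_insert_of_mem hi))

theorem X_mul_derivative_geometric (a : R) :
    X * d⁄dX R (mk (a ^ ·)) = mk (fun i => if i = 0 then 0 else a ^ i) * mk (a ^ ·) := by
  ext n
  rw [coeff_X_mul_derivative, coeff_mul, Finset.Nat.sum_antidiagonal_eq_sum_range_succ_mk,
    Finset.sum_range_succ']
  simp only [coeff_mk, Nat.succ_ne_zero, if_false, if_true, zero_mul, add_zero]
  rw [Finset.sum_congr rfl fun i hi => by
    rw [← pow_add, Nat.add_sub_cancel' (Finset.mem_range.mp hi)]]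
  simp

end CommSemiring

theorem X_mul_derivative_rescale_exp {A : Type*} [CommRing A] [Algebra ℚ A] (a : A) :
    X * d⁄dX A (rescale a (exp A)) = (C a * X) * rescale a (exp A) := by
  ext n
  cases n with
  | zero => simp
  | succ n =>
    have hexp : coeff (n + 1) (exp A) * (n + 1) = coeff n (exp A) := by
      rw [← coeff_derivative, derivative_exp]
    rw [coeff_X_mul_derivative, mul_assoc, coeff_C_mul, coeff_succ_X_mul, coeff_rescale,
      coeff_rescale, ← hexp]
    push_cast
    ring

open Finset.HasAntidiagonal in
theorem isBigO_coeff_sub_of_X_mul_derivative {𝕜 α : Type*} [NormedField 𝕜] [CharZero 𝕜]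
    {l : Filter α} {F f : α → 𝕜⟦X⟧} {G g : 𝕜⟦X⟧} {ε : α → ℝ}
    (hF : ∀ x, X * d⁄dX 𝕜 (F x) = f x * F x) (hG : X * d⁄dX 𝕜 G = g * G)
    (hf₀ : ∀ x, coeff 0 (f x) = 0) (hF₀ : ∀ x, coeff 0 (F x) = coeff 0 G)
    (hfg : ∀ i, (fun x => coeff i (f x) - coeff i g) =O[l] ε) (hε : ε =O[l] fun _ => (1 : ℝ))
    (n : ℕ) : (fun x => coeff n (F x) - coeff n G) =O[l] ε := by
  induction n using Nat.strong_induction_on with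
  | _ n ih =>
  rcases Nat.eq_zero_or_pos n with rfl | hn
  · simpa [hF₀] using isBigO_zero ε l
  have hrec (H h : 𝕜⟦X⟧) (hH : X * d⁄dX 𝕜 H = h * H) :
      (n : 𝕜) * coeff n H = ∑ p ∈ antidiagonal n, coeff p.1 h * coeff p.2 H := by
    rw [← coeff_X_mul_derivative, hH, coeff_mul]
  have hdiff : (fun x => coeff n (F x) - coeff n G) = fun x => (n : 𝕜)⁻¹ *
      ∑ p ∈ antidiagonal n, (coeff p.1 (f x) * (coeff p.2 (F x) - coeff p.2 G)
        + (coeff p.1 (f x) - coeff p.1 g) * coeff p.2 G) := by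
    funext x
    rw [eq_inv_mul_iff_mul_eq₀ (by exact_mod_cast hn.ne'), mul_sub, hrec _ _ (hF x),
      hrec _ _ hG, ← Finset.sum_sub_distrib]
    exact Finset.sum_congr rfl fun _ _ => by ring
  rw [hdiff]
  refine .const_mul_left (.fun_sum fun p hp => .add ?_
    (by simpa using (hfg p.1).mul (isBigO_const_one ℝ (coeff p.2 G) l))) _
  obtain ⟨i, j⟩ := p
  -- `coeff 0 (f x) = 0` removes the term `(0, n)`, so only `coeff j (F x)` with `j < n` remain
  rcases Nat.eq_zero_or_pos i with rfl | hi
  · simpa [hf₀] using isBigO_zero ε l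
  have hj : j < n := by have hij : i + j = n := mem_antidiagonal.mp hp; omega
  have hfi : (fun x => coeff i (f x)) =O[l] fun _ => (1 : ℝ) := by
    simpa using ((hfg i).trans hε).add (isBigO_const_one ℝ (coeff i g) l)
  simpa using hfi.mul (ih j hj)

end PowerSeries

theorem Asymptotics.IsBigO.pow_sub_pow {α 𝕜 : Type*} [NormedField 𝕜] {l : Filter α}
    {a b : α → 𝕜} {δ M : α → ℝ} (ha : a =O[l] M) (hb : b =O[l] M)
    (hab : (fun x => a x - b x) =O[l] δ) (n : ℕ) :
    (fun x => a x ^ n - b x ^ n) =O[l] fun x => M x ^ (n - 1) * δ x := by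
  have hsum : (fun x => ∑ i ∈ Finset.range n, a x ^ i * b x ^ (n - 1 - i)) =O[l]
      fun x => M x ^ (n - 1) := .fun_sum fun i hi => by
    have hi : i + (n - 1 - i) = n - 1 := by have := Finset.mem_range.mp hi; omega
    simpa [← pow_add, hi] using (ha.pow i).mul (hb.pow (n - 1 - i))
  simpa [geom_sum₂_mul] using hsum.mul hab

theorem tendsto_log_log_atTop : Tendsto (fun x => Real.log (Real.log x)) atTop atTop :=
  Real.tendsto_log_atTop.comp Real.tendsto_log_atTop

theorem isBigO_one_log_log : (fun _ => (1 : ℝ)) =O[atTop] fun x => Real.log (Real.log x) :=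
  (isBigO_const_left_iff_pos_le_norm one_ne_zero).mpr ⟨1, one_pos,
    (tendsto_log_log_atTop.eventually_ge_atTop 1).mono fun _ hx => hx.trans (le_abs_self _)⟩

theorem isBigO_log_log_pow_pow {j k : ℕ} (hjk : j ≤ k) :
    (fun x => Real.log (Real.log x) ^ j) =O[atTop] fun x => Real.log (Real.log x) ^ k := by
  refine .of_bound 1 ((tendsto_log_log_atTop.eventually_ge_atTop 1).mono fun x hx => ?_)
  rw [one_mul, Real.norm_eq_abs, Real.norm_eq_abs, abs_of_nonneg (by positivity),
    abs_of_nonneg (by positivity)]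
  exact pow_le_pow_right₀ hx hjk

theorem isBigO_rpow_neg_half_mul_log_log :
    (fun x => x ^ (-(1 / 2 : ℝ)) * Real.log (Real.log x)) =O[atTop] fun x => 1 / Real.log x := by
  have hsq := (isLittleO_log_rpow_rpow_atTop 2 (by norm_num : (0 : ℝ) < 1 / 2)).bound one_pos
  refine .of_bound 1 ?_
  filter_upwards [hsq, eventually_gt_atTop 0, Real.tendsto_log_atTop.eventually_ge_atTop 1]
    with x hsq hx hlog
  have hloglog : 0 ≤ Real.log (Real.log x) := Real.log_nonneg hlog
  have hloglog_le : Real.log (Real.log x) ≤ Real.log x :=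
    (Real.log_le_sub_one_of_pos (by linarith)).trans (by linarith)
  rw [one_mul, Real.norm_of_nonneg (by positivity), Real.norm_of_nonneg (by positivity)]
  rw [one_mul, Real.norm_of_nonneg (by positivity), Real.norm_of_nonneg (by positivity),
    Real.rpow_two] at hsq
  rw [le_div_iff₀ (by linarith)]
  calc x ^ (-(1 / 2 : ℝ)) * Real.log (Real.log x) * Real.log x
      ≤ x ^ (-(1 / 2 : ℝ)) * Real.log x ^ 2 := by
        rw [mul_assoc, sq]; gcongr
    _ ≤ x ^ (-(1 / 2 : ℝ)) * x ^ (1 / 2 : ℝ) := by gcongr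
    _ = 1 := by rw [← Real.rpow_add hx]; norm_num

theorem isBigO_rpow_neg_half_mul_log_log_pow {k : ℕ} (hk : 1 ≤ k) :
    (fun x => x ^ (-(1 / 2 : ℝ)) * Real.log (Real.log x) ^ k) =O[atTop]
      fun x => Real.log (Real.log x) ^ (k - 1) / Real.log x := by
  obtain ⟨k, rfl⟩ := Nat.exists_eq_add_of_le' hk
  refine ((isBigO_refl (fun x => Real.log (Real.log x) ^ k) atTop).mul
    isBigO_rpow_neg_half_mul_log_log).congr (fun x => by ring) (fun x => ?_)
  rw [Nat.add_sub_cancel, mul_one_div]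

theorem mem_primesUpTo {x : ℝ} {p : ℕ} : p ∈ primesUpTo x ↔ p.Prime ∧ (p : ℝ) ≤ x := by
  simp only [primesUpTo, Finset.mem_filter, Finset.mem_range, Nat.lt_succ_iff]
  constructor
  · rintro ⟨hle, hp⟩
    have hx : 0 ≤ x := by
      by_contra! h
      rw [Nat.floor_of_nonpos h.le] at hle
      exact absurd hle (by have := hp.two_le; omega)
    exact ⟨hp, (Nat.cast_le.mpr hle).trans (Nat.floor_le hx)⟩
  · rintro ⟨hp, hle⟩
    exact ⟨Nat.le_floor hle, hp⟩

theorem Ztr_one (x : ℝ) : Ztr 1 x = ∑ p ∈ primesUpTo x, (1 : ℝ) / p := by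
  simp only [Ztr, Real.rpow_neg_one, one_div]

theorem bigOmega_eq_sum_factorization (n : ℕ) :
    bigOmega n = n.factorization.sum fun _ e => e := by
  rw [bigOmega, ← ArithmeticFunction.cardFactors_apply,
    ArithmeticFunction.cardFactors_eq_sum_factorization]

theorem isSmooth_and_bigOmega_eq_iff {x : ℝ} {k n : ℕ} :
    IsSmooth x n ∧ bigOmega n = k ↔
      n ∈ (Finset.finsuppAntidiag (primesUpTo x) k).image (·.prod (· ^ ·)) := by
  simp only [Finset.mem_image, Finset.mem_finsuppAntidiag]
  constructor
  · rintro ⟨⟨hn, hsmooth⟩, hΩ⟩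
    have hsupp : n.factorization.support ⊆ primesUpTo x := fun p hp => by
      rw [Nat.support_factorization] at hp
      exact mem_primesUpTo.mpr ⟨Nat.prime_of_mem_primeFactors hp, hsmooth p hp⟩
    refine ⟨n.factorization, ⟨?_, hsupp⟩, Nat.prod_factorization_pow_eq_self hn.ne'⟩
    rw [← hΩ, bigOmega_eq_sum_factorization,
      Finsupp.sum_of_support_subset _ hsupp _ fun _ _ => rfl]
  · rintro ⟨l, ⟨hsum, hsupp⟩, rfl⟩
    have hprime : ∀ p ∈ l.support, p.Prime := fun p hp => (mem_primesUpTo.mp (hsupp hp)).1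
    have hfac := Nat.prod_pow_factorization_eq_self hprime
    refine ⟨⟨Nat.pos_of_ne_zero ?_, fun p hp => ?_⟩, ?_⟩
    · exact Finset.prod_ne_zero_iff.mpr fun p hp => pow_ne_zero _ (hprime p hp).ne_zero
    · rw [← Nat.support_factorization, hfac] at hp
      exact (mem_primesUpTo.mp (hsupp hp)).2
    · rw [bigOmega_eq_sum_factorization, hfac, ← hsum,
        Finsupp.sum_of_support_subset _ hsupp _ fun _ _ => rfl]

noncomputable def smoothGenFun (x : ℝ) : ℝ⟦X⟧ :=
  ∏ p ∈ primesUpTo x, mk fun e => ((p : ℝ)⁻¹) ^ e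

theorem coeff_smoothGenFun (x : ℝ) (k : ℕ) :
    coeff k (smoothGenFun x) =
      ∑' n : ℕ, if IsSmooth x n ∧ bigOmega n = k then (1 : ℝ) / n else 0 := by
  have hinj : Set.InjOn (·.prod (· ^ ·))
      (Finset.finsuppAntidiag (primesUpTo x) k : Set (ℕ →₀ ℕ)) := by
    intro l hl l' hl' h
    have hprime : ∀ l ∈ Finset.finsuppAntidiag (primesUpTo x) k, ∀ p ∈ l.support, p.Prime :=
      fun l hl p hp => (mem_primesUpTo.mp ((Finset.mem_finsuppAntidiag.mp hl).2 hp)).1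
    rw [← Nat.prod_pow_factorization_eq_self (hprime l hl),
      ← Nat.prod_pow_factorization_eq_self (hprime l' hl')]
    exact congrArg Nat.factorization h
  have hzero : ∀ n ∉ (Finset.finsuppAntidiag (primesUpTo x) k).image (·.prod (· ^ ·)),
      (if IsSmooth x n ∧ bigOmega n = k then (1 : ℝ) / n else 0) = 0 :=
    fun n hn => if_neg (mt isSmooth_and_bigOmega_eq_iff.mp hn)
  rw [tsum_eq_sum hzero,
    Finset.sum_congr rfl fun n hn => if_pos (isSmooth_and_bigOmega_eq_iff.mpr hn),
    Finset.sum_image hinj, smoothGenFun, coeff_prod]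
  refine Finset.sum_congr rfl fun l hl => ?_
  rw [Finsupp.prod_of_support_subset l (Finset.mem_finsuppAntidiag.mp hl).2 _
    fun _ _ => pow_zero _]
  simp [Finset.prod_inv_distrib]

noncomputable def truncPrimeZetaSeries (x : ℝ) : ℝ⟦X⟧ :=
  mk fun i => if i = 0 then 0 else Ztr i x

theorem X_mul_derivative_smoothGenFun (x : ℝ) :
    X * d⁄dX ℝ (smoothGenFun x) = truncPrimeZetaSeries x * smoothGenFun x := by
  rw [smoothGenFun, X_mul_derivative_prod _ fun p _ => X_mul_derivative_geometric _]
  congr 1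
  ext i
  simp only [map_sum, coeff_mk, truncPrimeZetaSeries]
  split_ifs
  · simp
  · refine Finset.sum_congr rfl fun p _ => ?_
    rw [Real.rpow_neg (Nat.cast_nonneg p), Real.rpow_natCast, inv_pow]

theorem abs_Ztr_sub_Zp_le {j : ℕ} (hj : 2 ≤ j) {x : ℝ} (hx : 0 < x) :
    |Ztr j x - Zp j| ≤ (∑' p : Nat.Primes, (p : ℝ) ^ (-(3 / 2 : ℝ))) * x ^ (-(1 / 2 : ℝ)) := by
  set s : Finset Nat.Primes := (primesUpTo x).subtype Nat.Prime
  have hj' : (2 : ℝ) ≤ j := by exact_mod_cast hj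
  have hsummable : Summable fun p : Nat.Primes => (p : ℝ) ^ (-(3 / 2 : ℝ)) :=
    Nat.Primes.summable_rpow.mpr (by norm_num)
  have hZsummable : Summable fun p : Nat.Primes => 1 / (p : ℝ) ^ j :=
    (Nat.Primes.summable_rpow.mpr (by linarith : -(j : ℝ) < -1)).congr fun p => by
      rw [Real.rpow_neg (Nat.cast_nonneg _), Real.rpow_natCast, one_div]
  have hZtr : Ztr j x = ∑ p ∈ s, 1 / (p : ℝ) ^ j := by
    rw [Ztr, ← Finset.sum_subtype_of_mem _ fun p hp => (mem_primesUpTo.mp hp).1]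
    refine Finset.sum_congr rfl fun p _ => ?_
    rw [Real.rpow_neg (Nat.cast_nonneg p), Real.rpow_natCast, one_div]
  have htail : ∀ p : ↑(s : Set Nat.Primes)ᶜ,
      1 / ((p : Nat.Primes) : ℝ) ^ j ≤ x ^ (-(1 / 2 : ℝ)) * (p : ℝ) ^ (-(3 / 2 : ℝ)) :=
    fun p => by
    have hxp : x < ((p : Nat.Primes) : ℝ) := by
      by_contra! h
      exact p.2 (Finset.mem_subtype.mpr (mem_primesUpTo.mpr ⟨(p : Nat.Primes).2, h⟩))
    have hp : (1 : ℝ) ≤ (p : Nat.Primes) := by exact_mod_cast (p : Nat.Primes).2.one_lt.le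
    calc 1 / ((p : Nat.Primes) : ℝ) ^ j = ((p : Nat.Primes) : ℝ) ^ (-(j : ℝ)) := by
          rw [Real.rpow_neg (by positivity), Real.rpow_natCast, one_div]
      _ ≤ ((p : Nat.Primes) : ℝ) ^ (-(1 / 2 : ℝ) + -(3 / 2 : ℝ)) :=
          Real.rpow_le_rpow_of_exponent_le hp (by linarith)
      _ ≤ x ^ (-(1 / 2 : ℝ)) * (p : ℝ) ^ (-(3 / 2 : ℝ)) := by
          rw [Real.rpow_add (by positivity)]
          exact mul_le_mul_of_nonneg_right
            (Real.rpow_le_rpow_of_nonpos hx hxp.le (by norm_num)) (by positivity)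
  rw [hZtr, Zp, ← hZsummable.sum_add_tsum_compl (s := s), sub_add_cancel_left, abs_neg,
    abs_of_nonneg (tsum_nonneg fun _ => by positivity), mul_comm]
  calc ∑' p : ↑(s : Set Nat.Primes)ᶜ, 1 / ((p : Nat.Primes) : ℝ) ^ j
      ≤ ∑' p : ↑(s : Set Nat.Primes)ᶜ, x ^ (-(1 / 2 : ℝ)) * (p : ℝ) ^ (-(3 / 2 : ℝ)) :=
        (hZsummable.subtype _).tsum_le_tsum htail ((hsummable.subtype _).mul_left _)
    _ ≤ x ^ (-(1 / 2 : ℝ)) * ∑' p : Nat.Primes, (p : ℝ) ^ (-(3 / 2 : ℝ)) := by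
        rw [tsum_mul_left]
        gcongr
        exact hsummable.tsum_subtype_le _ _ fun _ => by positivity

theorem isBigO_Ztr_sub_Zp {j : ℕ} (hj : 2 ≤ j) :
    (fun x => Ztr j x - Zp j) =O[atTop] fun x => x ^ (-(1 / 2 : ℝ)) := by
  refine .of_bound (∑' p : Nat.Primes, (p : ℝ) ^ (-(3 / 2 : ℝ)))
    ((eventually_gt_atTop 0).mono fun x hx => ?_)
  rw [Real.norm_eq_abs, Real.norm_of_nonneg (by positivity)]
  exact abs_Ztr_sub_Zp_le hj hx

noncomputable def primeZetaSeries : ℝ⟦X⟧ := mk fun i => if i < 2 then 0 else Zp i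

theorem X_mul_derivative_mk_of_recurrence {c : ℕ → ℝ}
    (hc : ∀ m, 1 ≤ m → c m = (1 / (m : ℝ)) * ∑ j ∈ Finset.Icc 2 m, c (m - j) * Zp j) :
    X * d⁄dX ℝ (mk c) = primeZetaSeries * mk c := by
  ext m
  rw [coeff_X_mul_derivative, coeff_mul, Finset.Nat.sum_antidiagonal_eq_sum_range_succ_mk]
  rcases Nat.eq_zero_or_pos m with rfl | hm
  · simp [primeZetaSeries]
  have hIcc : Finset.Icc 2 m = (Finset.range (m + 1)).filter fun i => ¬ i < 2 := by
    ext i; simp only [Finset.mem_Icc, Finset.mem_filter, Finset.mem_range]; omega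
  rw [coeff_mk, hc m hm, ← mul_assoc, mul_one_div_cancel (by positivity), one_mul, hIcc,
    Finset.sum_filter]
  refine Finset.sum_congr rfl fun i _ => ?_
  simp only [primeZetaSeries, coeff_mk]
  split_ifs <;> ring

noncomputable def dissectedGenFun (x : ℝ) : ℝ⟦X⟧ :=
  rescale (-Ztr 1 x) (exp ℝ) * smoothGenFun x

theorem smoothGenFun_eq_rescale_exp_mul (x : ℝ) :
    smoothGenFun x = rescale (Ztr 1 x) (exp ℝ) * dissectedGenFun x := by
  rw [dissectedGenFun, ← mul_assoc, exp_mul_exp_eq_exp_add, add_neg_cancel, rescale_zero_apply,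
    constantCoeff_exp, map_one, one_mul]

theorem X_mul_derivative_dissectedGenFun (x : ℝ) :
    X * d⁄dX ℝ (dissectedGenFun x) =
      (C (-Ztr 1 x) * X + truncPrimeZetaSeries x) * dissectedGenFun x :=
  X_mul_derivative_mul (X_mul_derivative_rescale_exp _) (X_mul_derivative_smoothGenFun x)

theorem coeff_C_mul_X_add_truncPrimeZetaSeries (x : ℝ) (i : ℕ) :
    coeff i (C (-Ztr 1 x) * X + truncPrimeZetaSeries x) = if i < 2 then 0 else Ztr i x := by
  rcases i with _ | _ | i <;> simp [truncPrimeZetaSeries]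

theorem coeff_zero_dissectedGenFun (x : ℝ) : coeff 0 (dissectedGenFun x) = 1 := by
  rw [coeff_zero_eq_constantCoeff_apply, dissectedGenFun, smoothGenFun, map_mul, map_prod,
    ← coeff_zero_eq_constantCoeff_apply, coeff_rescale]
  simp

theorem tsum_smooth_eq_sum_coeff_dissectedGenFun (x : ℝ) (k : ℕ) :
    (∑' n : ℕ, if IsSmooth x n ∧ bigOmega n = k then (1 : ℝ) / n else 0) =
      ∑ j ∈ Finset.range (k + 1),
        coeff (k - j) (dissectedGenFun x) / j.factorial * Ztr 1 x ^ j := by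
  rw [← coeff_smoothGenFun, smoothGenFun_eq_rescale_exp_mul, coeff_mul,
    Finset.Nat.sum_antidiagonal_eq_sum_range_succ_mk]
  refine Finset.sum_congr rfl fun j _ => ?_
  simp only [coeff_rescale, coeff_exp, one_div, map_inv₀, map_natCast]
  ring

theorem isBigO_coeff_dissectedGenFun_sub {c : ℕ → ℝ} (hc0 : c 0 = 1)
    (hc : ∀ m, 1 ≤ m → c m = (1 / (m : ℝ)) * ∑ j ∈ Finset.Icc 2 m, c (m - j) * Zp j) (m : ℕ) :
    (fun x => coeff m (dissectedGenFun x) - c m) =O[atTop] fun x => x ^ (-(1 / 2 : ℝ)) := by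
  have hfg : ∀ i, (fun x => coeff i (C (-Ztr 1 x) * X + truncPrimeZetaSeries x) -
      coeff i primeZetaSeries) =O[atTop] fun x => x ^ (-(1 / 2 : ℝ)) := fun i => by
    simp only [coeff_C_mul_X_add_truncPrimeZetaSeries, primeZetaSeries, coeff_mk]
    split_ifs with hi
    · simpa using isBigO_zero _ _
    · exact isBigO_Ztr_sub_Zp (by omega)
  simpa only [coeff_mk] using isBigO_coeff_sub_of_X_mul_derivative (G := mk c)
    X_mul_derivative_dissectedGenFun (X_mul_derivative_mk_of_recurrence hc)
    (fun x => by simpa using coeff_C_mul_X_add_truncPrimeZetaSeries x 0)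
    (fun x => by rw [coeff_zero_dissectedGenFun, coeff_mk, hc0]) hfg
    ((tendsto_rpow_neg_atTop (by norm_num : (0 : ℝ) < 1 / 2)).isBigO_one ℝ) m

theorem dissected_mertens (k : ℕ) (hk : 1 ≤ k) (c : ℕ → ℝ) (hc0 : c 0 = 1)
    (hc : ∀ m, 1 ≤ m → c m = (1 / (m : ℝ)) * ∑ j ∈ Finset.Icc 2 m, c (m - j) * Zp j)
    (β : ℝ)
    (hβ : (fun x : ℝ => (∑ p ∈ primesUpTo x, (1 : ℝ) / p) - Real.log (Real.log x) - β)
        =O[atTop] fun x : ℝ => 1 / Real.log x) :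
    (fun x : ℝ =>
        (∑' n : ℕ, if IsSmooth x n ∧ bigOmega n = k then (1 : ℝ) / n else 0)
          - ∑ j ∈ Finset.range (k + 1),
              c (k - j) / (Nat.factorial j) * (Real.log (Real.log x) + β) ^ j)
      =O[atTop] fun x : ℝ => (Real.log (Real.log x)) ^ (k - 1) / Real.log x := by
  have hPL : (fun x => Ztr 1 x - (Real.log (Real.log x) + β)) =O[atTop]
      fun x => 1 / Real.log x := by
    simpa only [Ztr_one, sub_sub] using hβ
  have hL : (fun x => Real.log (Real.log x) + β) =O[atTop] fun x => Real.log (Real.log x) :=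
    (isBigO_refl _ _).add ((isBigO_const_one ℝ β _).trans isBigO_one_log_log)
  have hP : (fun x => Ztr 1 x) =O[atTop] fun x => Real.log (Real.log x) := by
    have hδ : (fun x => 1 / Real.log x) =O[atTop] fun x => Real.log (Real.log x) :=
      ((Real.tendsto_log_atTop.inv_tendsto_atTop.isBigO_one ℝ).trans
        isBigO_one_log_log).congr_left fun x => by simp
    simpa using (hPL.trans hδ).add hL
  have hsplit : (fun x : ℝ =>
      (∑' n : ℕ, if IsSmooth x n ∧ bigOmega n = k then (1 : ℝ) / n else 0) -
        ∑ j ∈ Finset.range (k + 1), c (k - j) / j.factorial * (Real.log (Real.log x) + β) ^ j) =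
      fun x => ∑ j ∈ Finset.range (k + 1), (j.factorial : ℝ)⁻¹ *
        ((coeff (k - j) (dissectedGenFun x) - c (k - j)) * Ztr 1 x ^ j +
          c (k - j) * (Ztr 1 x ^ j - (Real.log (Real.log x) + β) ^ j)) := by
    ext x
    rw [tsum_smooth_eq_sum_coeff_dissectedGenFun, ← Finset.sum_sub_distrib]
    exact Finset.sum_congr rfl fun j _ => by ring
  rw [hsplit]
  refine .fun_sum fun j hj => .const_mul_left (.add ?_ (.const_mul_left ?_ _)) _
  · have hjk : j ≤ k := Nat.lt_succ_iff.mp (Finset.mem_range.mp hj)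
    exact ((isBigO_coeff_dissectedGenFun_sub hc0 hc (k - j)).mul
      ((hP.pow j).trans (isBigO_log_log_pow_pow hjk))).trans
        (isBigO_rpow_neg_half_mul_log_log_pow hk)
  · have hjk : j - 1 ≤ k - 1 :=
      Nat.sub_le_sub_right (Nat.lt_succ_iff.mp (Finset.mem_range.mp hj)) 1
    simpa only [mul_one_div] using (hP.pow_sub_pow hL hPL j).trans
      ((isBigO_log_log_pow_pow hjk).mul (isBigO_refl _ _))
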